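/- Let Ω = {(x,y) ∈ ℝ² : x² - 1 < y < 1 - x²}. The function u(x,y) = 2xy for y > 0 and u(x,y) = 0 for y ≤ 0 agrees on ∂Ω with the smooth function φ(x,y) = x(y - x² + 1), is Lipschitz on Ω but not C¹ (it fails to be differentiable across {y = 0} where x ≠ 0). -/

import Mathlib

/-!
On the closure of `Ω` we have `u = 2x · max(y, 0)`. On the lower arc `y = x² - 1 ≤ 0`, so both
`u` and `φ = x (y - (x² - 1))` vanish; on the upper arc `y = 1 - x² ≥ 0` and `φ = x · 2y = u`.
On `Ω` the factors `2x` and `max(y, 0)` are bounded and Lipschitz, hence so is their product.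
Restricted to the vertical line through `(x, 0)`, `u` is `t ↦ 2x · max(t, 0)`, which has a corner
at `t = 0` when `x ≠ 0`.
-/

open Set NNReal

theorem frontier_setOf_lt_and_lt_subset {X α : Type*} [TopologicalSpace X] [LinearOrder α]
    [TopologicalSpace α] [OrderClosedTopology α] {f g h : X → α}
    (hf : Continuous f) (hg : Continuous g) (hh : Continuous h) :
    frontier {x | f x < g x ∧ g x < h x} ⊆
      {x | f x = g x ∧ g x ≤ h x} ∪ {x | f x ≤ g x ∧ g x = h x} := by
  rw [ofPred_and]
  refine (frontier_inter_subset _ _).trans (union_subset_union ?_ ?_)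
  · exact inter_subset_inter (frontier_lt_subset_eq hf hg) (closure_lt_subset_le hg hh)
  · exact inter_subset_inter (closure_lt_subset_le hf hg) (frontier_lt_subset_eq hg hh)

theorem LipschitzOnWith.mul_of_norm_le {α R : Type*} [PseudoMetricSpace α]
    [NonUnitalSeminormedRing R] {f g : α → R} {s : Set α} {Kf Kg Mf Mg : ℝ≥0}
    (hf : LipschitzOnWith Kf f s) (hg : LipschitzOnWith Kg g s)
    (hfM : ∀ x ∈ s, ‖f x‖ ≤ Mf) (hgM : ∀ x ∈ s, ‖g x‖ ≤ Mg) :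
    LipschitzOnWith (Mf * Kg + Mg * Kf) (fun x => f x * g x) s := by
  refine LipschitzOnWith.of_dist_le_mul fun x hx y hy => ?_
  have hfd := hf.dist_le_mul x hx y hy
  have hgd := hg.dist_le_mul x hx y hy
  rw [dist_eq_norm] at hfd hgd ⊢
  calc ‖f x * g x - f y * g y‖ = ‖f x * (g x - g y) + (f x - f y) * g y‖ := by
        rw [mul_sub, sub_mul, sub_add_sub_cancel]
    _ ≤ ‖f x‖ * ‖g x - g y‖ + ‖f x - f y‖ * ‖g y‖ :=
        (norm_add_le _ _).trans (add_le_add (norm_mul_le _ _) (norm_mul_le _ _))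
    _ ≤ Mf * (Kg * dist x y) + Kf * dist x y * Mg := by
        gcongr
        exacts [hfM x hx, hgM y hy]
    _ = ↑(Mf * Kg + Mg * Kf) * dist x y := by push_cast; ring

theorem abs_eq_two_mul_max_zero_sub {α : Type*} [Ring α] [LinearOrder α] [IsOrderedRing α]
    (a : α) : |a| = 2 * max a 0 - a := by
  rcases le_total a 0 with h | h
  · rw [abs_of_nonpos h, max_eq_right h, mul_zero, zero_sub]
  · rw [abs_of_nonneg h, max_eq_left h, two_mul, add_sub_cancel_right]

theorem not_differentiableAt_max_zero : ¬ DifferentiableAt ℝ (fun t : ℝ => max t 0) 0 := by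
  intro h
  refine not_differentiableAt_abs_zero ?_
  have : (abs : ℝ → ℝ) = fun t => 2 * max t 0 - t := funext abs_eq_two_mul_max_zero_sub
  rw [this]
  exact (h.const_mul 2).sub differentiableAt_id

theorem ite_pos_mul_eq_mul_max {α : Type*} [Ring α] [LinearOrder α] [IsOrderedRing α]
    (c a : α) : (if 0 < a then c * a else 0) = c * max a 0 := by
  rcases lt_or_ge 0 a with h | h
  · rw [if_pos h, max_eq_left h.le]
  · rw [if_neg h.not_gt, max_eq_right h, mul_zero]

theorem lipschitzWith_two_mul_fst : LipschitzWith 2 fun p : ℝ × ℝ => 2 * p.1 := by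
  have h := (lipschitzWith_smul (2 : ℝ)).comp (LipschitzWith.prod_fst (α := ℝ) (β := ℝ))
  rwa [Real.nnnorm_two, mul_one] at h

theorem two_mul_max_zero_eq_of_parabolic_arcs {x y : ℝ}
    (h : (x ^ 2 - 1 = y ∧ y ≤ 1 - x ^ 2) ∨ (x ^ 2 - 1 ≤ y ∧ y = 1 - x ^ 2)) :
    2 * x * max y 0 = x * (y - x ^ 2 + 1) := by
  rcases h with ⟨rfl, hle⟩ | ⟨hle, rfl⟩
  · rw [max_eq_right (by linarith)]; ring
  · rw [max_eq_left (by linarith)]; ring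

theorem abs_le_one_of_sq_sub_one_lt_one_sub_sq {x : ℝ} (h : x ^ 2 - 1 < 1 - x ^ 2) :
    |x| ≤ 1 := by
  rw [← sq_le_one_iff_abs_le_one]; linarith

theorem max_zero_le_one_of_lt_one_sub_sq {x y : ℝ} (h : y < 1 - x ^ 2) : max y 0 ≤ 1 :=
  max_le (by nlinarith) zero_le_one

theorem lipschitzOnWith_two_mul_fst_mul_max_snd_zero :
    LipschitzOnWith 4 (fun p : ℝ × ℝ => 2 * p.1 * max p.2 0)
      {p | p.1 ^ 2 - 1 < p.2 ∧ p.2 < 1 - p.1 ^ 2} := by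
  have hfst (p : ℝ × ℝ) (hp : p.1 ^ 2 - 1 < p.2 ∧ p.2 < 1 - p.1 ^ 2) :
      ‖2 * p.1‖ ≤ (2 : ℝ≥0) := by
    rw [Real.norm_eq_abs, abs_mul, abs_two, NNReal.coe_two]
    linarith [abs_le_one_of_sq_sub_one_lt_one_sub_sq (hp.1.trans hp.2)]
  have hsnd (p : ℝ × ℝ) (hp : p.1 ^ 2 - 1 < p.2 ∧ p.2 < 1 - p.1 ^ 2) :
      ‖max p.2 0‖ ≤ (1 : ℝ≥0) := by
    rw [Real.norm_of_nonneg (le_max_right _ _), NNReal.coe_one]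
    exact max_zero_le_one_of_lt_one_sub_sq hp.2
  have h := lipschitzWith_two_mul_fst.lipschitzOnWith.mul_of_norm_le
    (LipschitzWith.prod_snd.max_const 0).lipschitzOnWith hfst hsnd
  rwa [show (2 : ℝ≥0) * 1 + 1 * 2 = 4 by norm_num] at h

theorem not_differentiableAt_two_mul_fst_mul_max_snd_zero {x : ℝ} (hx : x ≠ 0) :
    ¬ DifferentiableAt ℝ (fun p : ℝ × ℝ => 2 * p.1 * max p.2 0) (x, 0) := by
  intro h
  have hslice : DifferentiableAt ℝ (fun t : ℝ => 2 * x * max t 0) 0 :=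
    h.comp (𝕜 := ℝ) 0 ((differentiableAt_const x).prodMk differentiableAt_id)
  refine not_differentiableAt_max_zero ?_
  have hx2 : (2 * x)⁻¹ * (2 * x) = 1 := inv_mul_cancel₀ (mul_ne_zero two_ne_zero hx)
  simpa only [← mul_assoc, hx2, one_mul] using hslice.const_mul (2 * x)⁻¹

/-- Let `Ω = {(x,y) ∈ ℝ² : x² - 1 < y < 1 - x²}`.  The function `u(x,y) = 2xy`
for `y > 0` and `u(x,y) = 0` for `y ≤ 0` agrees on `∂Ω` with the smooth function
`φ(x,y) = x(y - x² + 1)`, is Lipschitz on `Ω`, but fails to be differentiable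
at the points `(x,0)` with `x ≠ 0`. -/
theorem sharp_example_H1 :
    let Ω : Set (ℝ × ℝ) := {p | p.1 ^ 2 - 1 < p.2 ∧ p.2 < 1 - p.1 ^ 2}
    let u : ℝ × ℝ → ℝ := fun p => if 0 < p.2 then 2 * p.1 * p.2 else 0
    let φ : ℝ × ℝ → ℝ := fun p => p.1 * (p.2 - p.1 ^ 2 + 1)
    (∀ p ∈ frontier Ω, u p = φ p) ∧
    (∃ K : NNReal, LipschitzOnWith K u Ω) ∧
    (∀ x : ℝ, x ≠ 0 → ¬ DifferentiableAt ℝ u (x, 0)) := by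
  intro Ω u φ
  have hu : u = fun p => 2 * p.1 * max p.2 0 := funext fun p => ite_pos_mul_eq_mul_max _ _
  rw [hu]
  refine ⟨fun p hp => ?_, ⟨4, lipschitzOnWith_two_mul_fst_mul_max_snd_zero⟩,
    fun x hx => not_differentiableAt_two_mul_fst_mul_max_snd_zero hx⟩
  exact two_mul_max_zero_eq_of_parabolic_arcs
    (frontier_setOf_lt_and_lt_subset (by fun_prop) continuous_snd (by fun_prop) hp)
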